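/- Let p be a prime and let P_p = {g : 1 ≤ g ≤ p − 1, g is a primitive root mod p} be the set of primitive roots modulo p. Then for every integer s with p ∤ s, the exponential sum satisfies |Σ_{g ∈ P_p} e^{2πi s g / p}| ≤ 2^{ω(p−1)} · √p, where ω(m) denotes the number of distinct prime divisors of m; moreover Σ_{g ∈ P_p} 1 = φ(p − 1). -/

import Mathlib

open Finset
open scoped Classical

/-!
Möbius inversion over the divisors of `n = p - 1` writes the indicator of "order exactly `n`"
as `∑_{d ∣ n} μ(d) [x ^ (n / d) = 1]`, so the sum over primitive roots is a signed combination
of at most `2 ^ ω(n)` sums over subgroups `H` of `(ℤ/pℤ)ˣ`. Each of these Gauss periods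
`η(a) = ∑_{h ∈ H} ψ(a h)` is constant on the coset `a H`, and Parseval gives
`∑_t |η(t)|² = p |H|`; hence `|H| |η(a)|² ≤ p |H|`, i.e. `|η(a)| ≤ √p`.
-/

open ArithmeticFunction
open scoped ArithmeticFunction.Moebius

theorem ArithmeticFunction.sum_divisors_moebius (n : ℕ) :
    ∑ d ∈ n.divisors, μ d = if n = 1 then 1 else 0 := by
  rw [← coe_mul_zeta_apply, moebius_mul_coe_zeta, one_apply]

theorem ArithmeticFunction.sum_divisors_abs_moebius {n : ℕ} (hn : n ≠ 0) :
    ∑ d ∈ n.divisors, |μ d| = 2 ^ n.primeFactors.card := by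
  simp_rw [abs_moebius]
  rw [← sum_filter, Nat.sum_divisors_filter_squarefree hn, sum_const, card_powerset,
    Nat.factors_eq, List.toFinset_coe, Nat.toFinset_factors, Nat.smul_one_eq_cast, Nat.cast_pow,
    Nat.cast_ofNat]

theorem sum_divisors_moebius_filter_pow_eq_one {G : Type*} [Monoid G] [DecidableEq G] (x : G)
    {n : ℕ} (hn : n ≠ 0) :
    ∑ d ∈ n.divisors with x ^ (n / d) = 1, μ d = if orderOf x = n then 1 else 0 := by
  by_cases hx : orderOf x ∣ n
  · have hpos : 0 < orderOf x := Nat.pos_of_dvd_of_pos hx (Nat.pos_of_ne_zero hn)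
    have hfilter : {d ∈ n.divisors | x ^ (n / d) = 1} = (n / orderOf x).divisors := by
      rw [← Nat.divisors_filter_dvd_of_dvd hn (Nat.div_dvd_of_dvd hx)]
      refine filter_congr fun d hd => ?_
      rw [← orderOf_dvd_iff_pow_eq_one, Nat.dvd_div_iff_mul_dvd (Nat.dvd_of_mem_divisors hd),
        Nat.dvd_div_iff_mul_dvd hx, mul_comm]
    rw [hfilter, sum_divisors_moebius]
    exact if_congr (by rw [Nat.div_eq_iff_eq_mul_left hpos hx, one_mul, eq_comm]) rfl rfl
  · rw [filter_false_of_mem, sum_empty, if_neg (fun h => hx h.dvd)]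
    intro d hd hpow
    exact hx <| (orderOf_dvd_of_pow_eq_one hpow).trans <|
      Nat.div_dvd_of_dvd (Nat.dvd_of_mem_divisors hd)

theorem sum_filter_orderOf_eq_eq_sum_divisors_moebius {G M : Type*} [Monoid G] [Fintype G]
    [DecidableEq G] [AddCommGroup M] {n : ℕ} (hn : n ≠ 0) (f : G → M) :
    ∑ x with orderOf x = n, f x =
      ∑ d ∈ n.divisors, μ d • ∑ x with x ^ (n / d) = 1, f x := by
  simp_rw [smul_sum, sum_filter]
  rw [sum_comm]
  refine sum_congr rfl fun x _ => ?_
  rw [← sum_filter, ← sum_smul, sum_divisors_moebius_filter_pow_eq_one x hn, ite_smul,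
    one_smul, zero_smul]

section GaussPeriod

variable {R : Type*} [CommRing R] [Fintype R] (ψ : AddChar R ℂ) (H : Subgroup Rˣ)

noncomputable def gaussPeriod (t : R) : ℂ := ∑ h : H, ψ (t * (h : Rˣ))

theorem gaussPeriod_mul_of_mem (t : R) {h : Rˣ} (hh : h ∈ H) :
    gaussPeriod ψ H (t * h) = gaussPeriod ψ H t :=
  Fintype.sum_equiv (Equiv.mulLeft ⟨h, hh⟩) _ _ fun k => by simp [mul_assoc]

variable {ψ}

theorem sum_norm_sq_gaussPeriod (hψ : ψ.IsPrimitive) :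
    ∑ t, ‖gaussPeriod ψ H t‖ ^ 2 = Fintype.card R * Fintype.card H := by
  have norm_sq_eq (t : R) :
      (‖gaussPeriod ψ H t‖ ^ 2 : ℂ) =
        ∑ h : H, ∑ k : H, ψ (t * ((h : Rˣ) - (k : Rˣ) : R)) := by
    rw [← Complex.mul_conj', gaussPeriod, map_sum, sum_mul_sum]
    refine sum_congr rfl fun h _ => sum_congr rfl fun k _ => ?_
    rw [← AddChar.map_neg_eq_conj, ← AddChar.map_add_eq_mul, mul_sub, sub_eq_add_neg]
  apply Complex.ofReal_injective
  push_cast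
  calc ∑ t, (‖gaussPeriod ψ H t‖ ^ 2 : ℂ)
      = ∑ h : H, ∑ k : H, ∑ t, ψ (t * ((h : Rˣ) - (k : Rˣ) : R)) := by
        simp_rw [norm_sq_eq]
        rw [sum_comm]
        exact sum_congr rfl fun _ _ => sum_comm
    _ = ∑ h : H, ∑ k : H, if h = k then (Fintype.card R : ℂ) else 0 := by
        refine sum_congr rfl fun h _ => sum_congr rfl fun k _ => ?_
        rw [AddChar.sum_mulShift _ hψ]
        simp only [sub_eq_zero, Units.val_inj, Subtype.coe_inj, Nat.cast_ite, Nat.cast_zero]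
    _ = Fintype.card R * Fintype.card H := by simp [mul_comm]

theorem norm_gaussPeriod_le (hψ : ψ.IsPrimitive) (a : Rˣ) :
    ‖gaussPeriod ψ H a‖ ≤ √(Fintype.card R) := by
  have hH : (0 : ℝ) < Fintype.card H := by exact_mod_cast Fintype.card_pos
  have hinj : Function.Injective fun h : H => (a : R) * (h : Rˣ) := fun h k hhk =>
    Subtype.ext (Units.ext (a.isUnit.mul_left_cancel hhk))
  have : Fintype.card H * ‖gaussPeriod ψ H a‖ ^ 2 ≤ Fintype.card R * Fintype.card H :=
    calc Fintype.card H * ‖gaussPeriod ψ H a‖ ^ 2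
        = ∑ h : H, ‖gaussPeriod ψ H (a * (h : Rˣ))‖ ^ 2 := by
          simp only [gaussPeriod_mul_of_mem _ _ _ (SetLike.coe_mem _), sum_const, card_univ,
            nsmul_eq_mul]
      _ = ∑ t ∈ univ.image fun h : H => (a : R) * (h : Rˣ), ‖gaussPeriod ψ H t‖ ^ 2 := by
          rw [sum_image fun h _ k _ hhk => hinj hhk]
      _ ≤ ∑ t, ‖gaussPeriod ψ H t‖ ^ 2 := sum_le_univ_sum_of_nonneg fun _ => by positivity
      _ = Fintype.card R * Fintype.card H := sum_norm_sq_gaussPeriod H hψ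
  exact Real.le_sqrt_of_sq_le (le_of_mul_le_mul_left (by linarith) hH)

end GaussPeriod

theorem AddChar.norm_sum_filter_orderOf_eq_le {R : Type*} [CommRing R] [Fintype R]
    [DecidableEq R] {ψ : AddChar R ℂ} (hψ : ψ.IsPrimitive) (a : Rˣ) {n : ℕ} (hn : n ≠ 0) :
    ‖∑ u : Rˣ with orderOf u = n, ψ (a * u)‖ ≤
      2 ^ n.primeFactors.card * √(Fintype.card R) := by
  have sum_pow_eq_one (m : ℕ) :
      ∑ u : Rˣ with u ^ m = 1, ψ (a * u) = gaussPeriod ψ (rootsOfUnity m R) a :=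
    sum_subtype _ (fun u => by simp [mem_rootsOfUnity]) _
  have sum_abs_moebius : ∑ d ∈ n.divisors, (|μ d| : ℝ) = 2 ^ n.primeFactors.card := by
    exact_mod_cast sum_divisors_abs_moebius hn
  rw [sum_filter_orderOf_eq_eq_sum_divisors_moebius hn (fun u : Rˣ => ψ (a * u))]
  calc ‖∑ d ∈ n.divisors, μ d • ∑ u : Rˣ with u ^ (n / d) = 1, ψ (a * u)‖
      ≤ ∑ d ∈ n.divisors, ‖μ d • ∑ u : Rˣ with u ^ (n / d) = 1, ψ (a * u)‖ :=
        norm_sum_le _ _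
    _ ≤ ∑ d ∈ n.divisors, (|μ d| : ℝ) * √(Fintype.card R) := by
      refine sum_le_sum fun d _ => ?_
      rw [zsmul_eq_mul, norm_mul, Complex.norm_intCast, sum_pow_eq_one]
      gcongr
      exact norm_gaussPeriod_le _ hψ a
    _ = 2 ^ n.primeFactors.card * √(Fintype.card R) := by rw [← sum_mul, sum_abs_moebius]

theorem sum_filter_orderOf_eq_units {M N : Type*} [Monoid M] [Fintype M] [DecidableEq M]
    [AddCommMonoid N] {n : ℕ} (hn : n ≠ 0) (f : M → N) :
    ∑ x with orderOf x = n, f x = ∑ u : Mˣ with orderOf u = n, f u := by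
  symm
  refine sum_bij (fun u _ => (u : M)) (fun u hu => ?_) (fun u _ v _ h => Units.ext h)
    (fun x hx => ?_) (fun _ _ => rfl)
  · simpa [orderOf_units] using hu
  · have hx : orderOf x = n := (mem_filter.mp hx).2
    have hunit : IsUnit x := (orderOf_pos_iff.mp (hx ▸ Nat.pos_of_ne_zero hn)).isUnit
    exact ⟨hunit.unit, by simpa [← orderOf_units] using hx, rfl⟩

theorem ZMod.sum_filter_Icc_natCast {n : ℕ} [NeZero n] {M : Type*} [AddCommMonoid M]
    {P : ZMod n → Prop} [DecidablePred P] (h0 : ¬P 0) (f : ZMod n → M) :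
    ∑ g ∈ (Icc 1 (n - 1)).filter (fun g : ℕ => P g), f g = ∑ x with P x, f x := by
  refine sum_nbij' (fun g : ℕ => (g : ZMod n)) ZMod.val (fun g hg => ?_) (fun x hx => ?_)
    (fun g hg => ?_) (fun x _ => ZMod.natCast_zmod_val x) (fun _ _ => rfl)
  · simpa using (mem_filter.mp hg).2
  · have hx : P x := (mem_filter.mp hx).2
    have hx0 : x.val ≠ 0 := by rw [Ne, ZMod.val_eq_zero]; rintro rfl; exact h0 hx
    have := ZMod.val_lt x
    simp only [mem_filter, mem_Icc, ZMod.natCast_zmod_val]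
    exact ⟨⟨by omega, by omega⟩, hx⟩
  · have := (mem_Icc.mp (mem_filter.mp hg).1).2
    exact ZMod.val_cast_of_lt (by have := NeZero.pos n; omega)

theorem ZMod.sum_filter_Icc_orderOf_eq_units {n k : ℕ} [NeZero n] [Nontrivial (ZMod n)]
    (hk : k ≠ 0) {M : Type*} [AddCommMonoid M] (f : ZMod n → M) :
    ∑ g ∈ (Icc 1 (n - 1)).filter (fun g : ℕ => orderOf (g : ZMod n) = k), f g =
      ∑ u : (ZMod n)ˣ with orderOf u = k, f u := by
  rw [ZMod.sum_filter_Icc_natCast (P := fun x => orderOf x = k)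
    (by rw [orderOf_zero]; exact hk.symm), sum_filter_orderOf_eq_units hk]

/-- Let `p` be a prime and `P_p` the set of primitive roots mod `p`
in `[1, p-1]`. Then for every integer `s` with `p ∤ s`,
`|∑_{g ∈ P_p} e^{2πi s g / p}| ≤ 2^{ω(p-1)} * √p`, where `ω(m)` is the number of
distinct prime divisors of `m`; moreover `|P_p| = φ(p-1)`. -/
theorem primitive_roots_exponential_sum_bound
    (p : ℕ) [hp : Fact p.Prime] :
    (∀ s : ℤ, ¬ (p : ℤ) ∣ s →
      ‖∑ g ∈ (Finset.Icc 1 (p - 1)).filter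
            (fun g : ℕ => orderOf ((g : ZMod p)) = p - 1),
          Complex.exp (2 * Real.pi * Complex.I * (s : ℂ) * (g : ℂ) / (p : ℂ))‖ ≤
        (2 : ℝ) ^ (p - 1).primeFactors.card * Real.sqrt p) ∧
    ((Finset.Icc 1 (p - 1)).filter
        (fun g : ℕ => orderOf ((g : ZMod p)) = p - 1)).card = Nat.totient (p - 1) := by
  have hk : p - 1 ≠ 0 := by have := hp.out.one_lt; omega
  refine ⟨fun s hs => ?_, ?_⟩
  · have hs0 : (s : ZMod p) ≠ 0 := by rwa [Ne, ZMod.intCast_zmod_eq_zero_iff_dvd]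
    set a : (ZMod p)ˣ := Units.mk0 _ hs0
    have hexp (g : ℕ) :
        Complex.exp (2 * Real.pi * Complex.I * (s : ℂ) * (g : ℂ) / (p : ℂ)) =
          ZMod.stdAddChar ((a : ZMod p) * (g : ZMod p)) := by
      have hcast : (s : ZMod p) * (g : ZMod p) = ((s * g : ℤ) : ZMod p) := by push_cast; rfl
      rw [Units.val_mk0, hcast, ZMod.stdAddChar_coe]
      push_cast
      ring_nf
    simp_rw [hexp]
    rw [ZMod.sum_filter_Icc_orderOf_eq_units hk (fun x => ZMod.stdAddChar ((a : ZMod p) * x))]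
    simpa [ZMod.card] using
      AddChar.norm_sum_filter_orderOf_eq_le (ZMod.isPrimitive_stdAddChar p) a hk
  · rw [card_eq_sum_ones, ZMod.sum_filter_Icc_orderOf_eq_units hk (fun _ => 1),
      ← card_eq_sum_ones]
    exact IsCyclic.card_orderOf_eq_totient (by rw [ZMod.card_units])
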